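/- arXiv:2003.06678 — 7 statements merged into one kernel-verified Lean document; each statement's English description precedes it below -/
import Mathlib

section
/- Let q be a prime power and S a set of q+1 points in PG(2,q) whose degree is n (i.e., n is the maximum size of the intersection of S with a line), where 3 ≤ n ≤ q+1. Then the number of lines disjoint from S is at least n(q+2−n) − (q+1). -/
/-- The projective plane `PG(2,q)`: points are 1-dimensional subspaces of `F³`. -/
abbrev PG (F : Type*) [Field F] := Projectivization F (Fin 3 → F)

/-- Incidence between a point and a line of `PG(2,q)` (lines given by dual coordinates):
`a·x + b·y + c·z = 0`. -/
def PGIncident {F : Type*} [Field F] (p l : PG F) : Prop :=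
  ∑ j : Fin 3, p.rep j * l.rep j = 0

/-- The number `u_i(S)` of lines of `PG(2,q)` meeting the point set `S` in exactly `i` points. -/
noncomputable def uIdx {F : Type*} [Field F] (S : Set (PG F)) (i : ℕ) : ℕ :=
  Nat.card {l : PG F // Nat.card {p : PG F // p ∈ S ∧ PGIncident p l} = i}

/-!
Fix a line `l₀` meeting `S` in `n` points. Through each of the `q + 1 - n` points `Q` of `l₀`
outside `S` pass `q` lines other than `l₀`. Each of them that meets `S` does so in a point off
`l₀`, and two such lines, both passing through `Q ∉ S`, cannot share that point; so at most
`|S| - n = q + 1 - n` of them meet `S`, and at least `n - 1` are skew to `S`. These skew lines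
through distinct points of `l₀` are distinct, since two points of `l₀` lie on no other common line.
Hence there are at least `(q + 1 - n)(n - 1) = n(q + 2 - n) - (q + 1)` skew lines.
-/

open Finset
open scoped LinearAlgebra.Projectivization

namespace Projectivization

variable {F : Type*} [Field F] {m : Type*} [Fintype m]

theorem orthogonal_iff_rep {v w : ℙ F (m → F)} : v.orthogonal w ↔ v.rep ⬝ᵥ w.rep = 0 := by
  conv_lhs => rw [← mk_rep v, ← mk_rep w]
  exact orthogonal_mk _ _

theorem orthogonal_mk_left_iff {v : m → F} (hv : v ≠ 0) {w : ℙ F (m → F)} :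
    (mk F v hv).orthogonal w ↔ v ⬝ᵥ w.rep = 0 := by
  conv_lhs => rw [← mk_rep w]
  exact orthogonal_mk _ _

theorem card_orthogonal [DecidableEq m] [Finite F] (w : ℙ F (m → F)) :
    Nat.card {v : ℙ F (m → F) // v.orthogonal w} =
      ∑ i ∈ range (Fintype.card m - 1), Nat.card F ^ i := by
  set f := dotProductEquiv F m w.rep
  have hf : f ≠ 0 := by simpa [f] using w.rep_nonzero
  have hmem (u : m → F) : u ∈ LinearMap.ker f ↔ u ⬝ᵥ w.rep = 0 := by
    simp [f, dotProduct_comm]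
  have hker : Module.finrank F (LinearMap.ker f) = Fintype.card m - 1 := by
    have := Module.Dual.finrank_ker_add_one_of_ne_zero hf
    simp only [Module.finrank_fintype_fun_eq_card] at this
    omega
  rw [← card_of_finrank F _ hker]
  have hmap (v : ℙ F (LinearMap.ker f)) :
      (map (LinearMap.ker f).subtype (LinearMap.ker f).injective_subtype v).orthogonal w := by
    induction v with | h u hu =>
    rw [map_mk, orthogonal_mk_left_iff, ← hmem]
    exact u.2
  refine (Nat.card_eq_of_bijective (fun v => ⟨_, hmap v⟩)
    ⟨fun v v' h => map_injective _ (LinearMap.ker f).injective_subtype (congrArg Subtype.val h),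
      ?_⟩).symm
  rintro ⟨v, hv⟩
  have hrep : v.rep ∈ LinearMap.ker f := (hmem _).2 (orthogonal_iff_rep.1 hv)
  refine ⟨mk F ⟨v.rep, hrep⟩ (by simpa using v.rep_nonzero), Subtype.ext ?_⟩
  simp only [map_mk, Submodule.coe_subtype, mk_rep]

theorem eq_cross_of_orthogonal [DecidableEq F] {u v w : ℙ F (Fin 3 → F)} (hvw : v ≠ w)
    (hv : u.orthogonal v) (hw : u.orthogonal w) : u = cross v w := by
  induction u with | h u hu =>
  induction v with | h v hv' =>
  induction w with | h w hw' =>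
  rw [orthogonal_mk] at hv hw
  rw [cross_mk_of_ne hv' hw' hvw, mk_eq_mk_iff_crossProduct_eq_zero,
    cross_cross_eq_smul_sub_smul', hw, dotProduct_comm v, hv, zero_smul, zero_smul, sub_zero]

end Projectivization

def AtMostOneLineThrough {α β : Type*} (I : α → β → Prop) : Prop :=
  ∀ ⦃a b : α⦄ ⦃x y : β⦄, a ≠ b → I a x → I b x → I a y → I b y → x = y

namespace AtMostOneLineThrough

variable {α β : Type*} [Fintype β] [DecidableEq β] {I : α → β → Prop} [∀ a b, Decidable (I a b)]

theorem card_lines_through_meeting_le (hI : AtMostOneLineThrough I) {S : Finset α} {Q : α}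
    {l₀ : β} (hQS : Q ∉ S) (hQl₀ : I Q l₀) :
    #{m | I Q m ∧ m ≠ l₀ ∧ ∃ p ∈ S, I p m} ≤ #{p ∈ S | ¬ I p l₀} := by
  refine card_le_card_of_forall_subsingleton (fun m p => I p m) ?_ ?_
  · intro m hm
    simp only [mem_filter, mem_univ, true_and] at hm
    obtain ⟨hQm, hml₀, p, hpS, hpm⟩ := hm
    have hpQ : p ≠ Q := by rintro rfl; exact hQS hpS
    exact ⟨p, mem_filter.2 ⟨hpS, fun hpl₀ => hml₀ (hI hpQ hpm hQm hpl₀ hQl₀)⟩, hpm⟩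
  · intro p hp m hm m' hm'
    simp only [mem_filter, mem_univ, true_and, Set.mem_ofPred_eq] at hp hm hm'
    have hpQ : p ≠ Q := by rintro rfl; exact hQS hp.1
    exact hI hpQ hm.2 hm.1.1 hm'.2 hm'.1.1

theorem card_lines_through_sub_le_card_skew_lines_through (hI : AtMostOneLineThrough I)
    {S : Finset α} {Q : α} {l₀ : β} (hQS : Q ∉ S) (hQl₀ : I Q l₀) :
    #{m | I Q m} - 1 - #{p ∈ S | ¬ I p l₀} ≤ #{m | I Q m ∧ m ≠ l₀ ∧ ∀ p ∈ S, ¬ I p m} := by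
  have hcover : ({m | I Q m} : Finset β) ⊆
      {l₀} ∪ ({m | I Q m ∧ m ≠ l₀ ∧ ∀ p ∈ S, ¬ I p m} : Finset β) ∪
        ({m | I Q m ∧ m ≠ l₀ ∧ ∃ p ∈ S, I p m} : Finset β) := by
    intro m
    simp only [mem_filter, mem_univ, true_and, mem_union, mem_singleton]
    grind
  have hunion := (card_le_card hcover).trans
    ((card_union_le _ _).trans (Nat.add_le_add_right (card_union_le _ _) _))
  have := card_lines_through_meeting_le hI hQS hQl₀
  rw [card_singleton] at hunion
  omega

theorem card_mul_le_card_skew_lines [Fintype α] [DecidableEq α] (hI : AtMostOneLineThrough I)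
    {r : ℕ} (hpencil : ∀ Q, #{m | I Q m} = r) (S : Finset α) (l₀ : β) :
    #{Q | I Q l₀ ∧ Q ∉ S} * (r - 1 - #{p ∈ S | ¬ I p l₀}) ≤ #{m | ∀ p ∈ S, ¬ I p m} := by
  calc _ ≤ #{m | m ≠ l₀ ∧ ∀ p ∈ S, ¬ I p m} * 1 := card_mul_le_card_mul I ?_ ?_
    _ ≤ _ := by
      rw [mul_one]
      exact card_le_card fun m => by simp only [mem_filter, mem_univ, true_and]; exact And.right
  · intro Q hQ
    simp only [mem_filter, mem_univ, true_and] at hQ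
    rw [← hpencil Q]
    refine (card_lines_through_sub_le_card_skew_lines_through hI hQ.2 hQ.1).trans
      (card_le_card fun m => ?_)
    simp only [bipartiteAbove, mem_filter, mem_univ, true_and]
    tauto
  · intro m hm
    simp only [mem_filter, mem_univ, true_and] at hm
    refine card_le_one.2 fun Q hQ Q' hQ' => ?_
    simp only [bipartiteBelow, mem_filter, mem_univ, true_and] at hQ hQ'
    by_contra hne
    exact hm.1 (hI hne hQ.2 hQ'.2 hQ.1.1 hQ'.1.1)

theorem mul_le_card_skew_lines [Fintype α] [DecidableEq α] (hI : AtMostOneLineThrough I)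
    {r : ℕ} (hpencil : ∀ Q, #{m | I Q m} = r) {S : Finset α} {l₀ : β}
    (hline : #{Q | I Q l₀} = r) :
    (r - #{p ∈ S | I p l₀}) * (r - 1 - (#S - #{p ∈ S | I p l₀})) ≤
      #{m | ∀ p ∈ S, ¬ I p m} := by
  have hoff := card_filter_add_card_filter_not (s := S) (I · l₀)
  have hrest := card_filter_add_card_filter_not (s := {Q | I Q l₀}) (· ∈ S)
  have hmeet : ({Q | I Q l₀ ∧ Q ∈ S} : Finset α) = {p ∈ S | I p l₀} := by
    ext
    simp [and_comm]
  rw [filter_filter, filter_filter, hline, hmeet] at hrest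
  have := card_mul_le_card_skew_lines hI hpencil S l₀
  rwa [show #{Q | I Q l₀ ∧ Q ∉ S} = r - #{p ∈ S | I p l₀} by omega,
    show #{p ∈ S | ¬ I p l₀} = #S - #{p ∈ S | I p l₀} by omega] at this

end AtMostOneLineThrough

-- The right-hand side is `(q + 1 - n) * (n - 1)`, in the form that holds for all `n`
-- under truncated subtraction.
theorem Nat.mul_sub_sub_eq (n q : ℕ) :
    n * (q + 2 - n) - (q + 1) = (q + 1 - n) * (q - (q + 1 - n)) := by
  rcases le_or_gt n (q + 1) with h | h
  · rcases n with _ | k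
    · simp
    obtain ⟨j, rfl⟩ := Nat.exists_eq_add_of_le (Nat.le_of_succ_le_succ h)
    rw [show k + j + 2 - (k + 1) = j + 1 by omega, show k + j + 1 - (k + 1) = j by omega,
      show k + j - j = k by omega, show (k + 1) * (j + 1) = j * k + (k + j + 1) by ring]
    omega
  · rw [show q + 2 - n = 0 by omega, show q + 1 - n = 0 by omega]
    simp

section PG

open Projectivization

variable {F : Type*} [Field F]

theorem pgIncident_iff_orthogonal {p l : PG F} : PGIncident p l ↔ p.orthogonal l :=
  orthogonal_iff_rep.symm

theorem atMostOneLineThrough_pgIncident : AtMostOneLineThrough (PGIncident (F := F)) := by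
  classical
  intro a b x y hab hax hbx hay hby
  by_contra hxy
  simp only [pgIncident_iff_orthogonal] at hax hbx hay hby
  exact hab ((eq_cross_of_orthogonal hxy hax hay).trans (eq_cross_of_orthogonal hxy hbx hby).symm)

theorem card_pgIncident_left [Fintype F] (l : PG F) :
    Nat.card {p // PGIncident p l} = Fintype.card F + 1 := by
  simp [pgIncident_iff_orthogonal, card_orthogonal, sum_range_succ, add_comm]

theorem card_pgIncident_right [Fintype F] (p : PG F) :
    Nat.card {l // PGIncident p l} = Fintype.card F + 1 := by
  rw [← card_pgIncident_left p]
  refine Nat.card_congr (Equiv.subtypeEquivRight fun l => ?_)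
  rw [pgIncident_iff_orthogonal, pgIncident_iff_orthogonal, orthogonal_comm]

theorem uIdx_zero_eq [Finite F] (S : Set (PG F)) :
    uIdx S 0 = Nat.card {l : PG F // ∀ p ∈ S, ¬ PGIncident p l} := by
  refine Nat.card_congr (Equiv.subtypeEquivRight fun l => ?_)
  simp [Finite.card_eq_zero_iff, isEmpty_subtype]

end PG

theorem stmt4_general (F : Type*) [Field F] [Fintype F] (S : Set (PG F))
    (hS : Nat.card S = Fintype.card F + 1) (n : ℕ)
    (hmax : ∃ l : PG F, Nat.card {p : PG F // p ∈ S ∧ PGIncident p l} = n) :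
    n * (Fintype.card F + 2 - n) - (Fintype.card F + 1) ≤ uIdx S 0 := by
  classical
  have := Fintype.ofFinite (PG F)
  have hcard (P : PG F → Prop) [DecidablePred P] : Nat.card {x // P x} = #{x | P x} := by
    rw [Nat.card_eq_fintype_card, Fintype.card_subtype]
  obtain ⟨l₀, hl₀⟩ := hmax
  have hS' : #S.toFinset = Fintype.card F + 1 := by
    rw [Set.toFinset_card, ← Nat.card_eq_fintype_card, hS]
  have hl₀' : #{p ∈ S.toFinset | PGIncident p l₀} = n := by
    rw [← hl₀, hcard]
    congr 1
    ext
    simp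
  have key := AtMostOneLineThrough.mul_le_card_skew_lines atMostOneLineThrough_pgIncident
    (fun Q => by rw [← hcard, card_pgIncident_right]) (S := S.toFinset)
    (by rw [← hcard, card_pgIncident_left] : #{Q | PGIncident Q l₀} = _)
  rw [hl₀', hS', Nat.add_sub_cancel] at key
  rw [uIdx_zero_eq, hcard, Nat.mul_sub_sub_eq]
  simpa using key

/-- if a `(q+1)`-set `S` in `PG(2,q)` has degree `n` (some line meets `S`
in exactly `n` points and no line meets `S` in more), with `3 ≤ n ≤ q+1`, then the
number of lines disjoint from `S` is at least `n(q+2−n) − (q+1)`. -/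
theorem stmt4 (F : Type*) [Field F] [Fintype F] (S : Set (PG F))
    (hS : Nat.card S = Fintype.card F + 1) (n : ℕ)
    (hn3 : 3 ≤ n) (hnq : n ≤ Fintype.card F + 1)
    (hmax : ∃ l : PG F, Nat.card {p : PG F // p ∈ S ∧ PGIncident p l} = n)
    (hbd : ∀ l : PG F, Nat.card {p : PG F // p ∈ S ∧ PGIncident p l} ≤ n) :
    n * (Fintype.card F + 2 - n) - (Fintype.card F + 1) ≤ uIdx S 0 :=
  stmt4_general F S hS n hmax
end

section
/- Let q be a prime power and f a polynomial over F_q of degree d with 2 ≤ d ≤ q−1, and suppose d divides q−1. Then the non-hitting index satisfies q(q−1)/d ≤ v_0(f) ≤ (d−1)·q(q−1)/d, where v_0(f) is the number of pairs (a,b) ∈ F_q² such that f(x) − a·x − b = 0 has no solution in F_q. -/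
/-!
For a slope `a`, the pairs `(a, b)` that are missed are the values missed by
`gₐ x = f x - a x`, and there are `q - |Im gₐ| = Σ (kᵥ - 1)` of them, `kᵥ` being the fibre sizes
of `gₐ`. The ordered collision pairs `x ≠ y` with `gₐ x = gₐ y` number `Σ kᵥ (kᵥ - 1)`, which lies
between `2 Σ (kᵥ - 1)` and `d Σ (kᵥ - 1)` because fibres have at most `d` points. Summed over all
slopes, every pair `x ≠ y` is a collision exactly once, for the slope of the chord through
`(x, f x)` and `(y, f y)`; hence `q (q - 1) ≤ d v₀(f)` and `2 v₀(f) ≤ q (q - 1)`.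
-/

open Finset Polynomial

section Collisions

variable {α β : Type*} [Fintype α] [DecidableEq β]

def collisionPairs (u : α → β) : Finset (α × α) :=
  {p ∈ univ.offDiag | u p.1 = u p.2}

theorem card_collisionPairs (u : α → β) :
    #(collisionPairs u) = ∑ v ∈ univ.image u, #{x | u x = v} * (#{x | u x = v} - 1) := by
  rw [card_eq_sum_card_fiberwise (f := fun p => u p.1) (t := univ.image u)
    fun p _ => mem_image_of_mem u (mem_univ p.1)]
  refine sum_congr rfl fun v _ => ?_
  have : {p ∈ collisionPairs u | u p.1 = v} = ({x | u x = v} : Finset α).offDiag := by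
    ext ⟨x, y⟩
    simp only [collisionPairs, mem_filter, mem_offDiag, mem_univ, true_and]
    constructor
    · rintro ⟨⟨hxy, hu⟩, hx⟩
      exact ⟨hx, hu ▸ hx, hxy⟩
    · rintro ⟨hx, hy, hxy⟩
      exact ⟨⟨hxy, hx.trans hy.symm⟩, hx⟩
  rw [this, offDiag_card, Nat.mul_sub_one]

theorem card_sub_card_image_eq_sum (u : α → β) :
    Fintype.card α - #(univ.image u) = ∑ v ∈ univ.image u, (#{x | u x = v} - 1) := by
  have hpos : ∀ v ∈ univ.image u, 1 ≤ #{x | u x = v} := by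
    intro v hv
    obtain ⟨x, -, rfl⟩ := mem_image.mp hv
    exact card_pos.mpr ⟨x, by simp⟩
  rw [← card_univ, card_eq_sum_card_image u univ, card_eq_sum_ones (univ.image u),
    ← sum_tsub_distrib _ hpos]

theorem two_mul_card_sub_card_image_le (u : α → β) :
    2 * (Fintype.card α - #(univ.image u)) ≤ #(collisionPairs u) := by
  rw [card_sub_card_image_eq_sum, card_collisionPairs, mul_sum]
  refine sum_le_sum fun v _ => ?_
  rcases Nat.lt_or_ge #{x | u x = v} 2 with h | h
  · simp [Nat.sub_eq_zero_of_le (Nat.le_of_lt_succ h)]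
  · exact Nat.mul_le_mul_right _ h

theorem card_collisionPairs_le {d : ℕ} (u : α → β) (hfib : ∀ v, #{x | u x = v} ≤ d) :
    #(collisionPairs u) ≤ d * (Fintype.card α - #(univ.image u)) := by
  rw [card_sub_card_image_eq_sum, card_collisionPairs, mul_sum]
  exact sum_le_sum fun v _ => Nat.mul_le_mul_right _ (hfib v)

end Collisions

theorem card_eval_sub_mul_eq_le_natDegree {R : Type*} [CommRing R] [IsDomain R] [Fintype R]
    [DecidableEq R] {f : R[X]} (hf : 1 < f.natDegree) (a v : R) :
    #{x | f.eval x - a * x = v} ≤ f.natDegree := by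
  have hdeg : (f - (C a * X + C v)).natDegree = f.natDegree :=
    natDegree_sub_eq_left_of_natDegree_lt (natDegree_linear_le.trans_lt hf)
  have hne : f - (C a * X + C v) ≠ 0 := fun h => by simp [h] at hdeg; omega
  rw [← hdeg]
  refine card_le_degree_of_subset_roots fun x hx => ?_
  have hx : f.eval x - a * x = v := (mem_filter.mp hx).2
  rw [mem_roots hne, IsRoot, eval_sub, eval_add, eval_mul, eval_C, eval_X, eval_C]
  linear_combination hx

section Slopes

variable {F : Type*} [Field F] [Fintype F] [DecidableEq F]

theorem sum_card_collisionPairs_sub_mul (φ : F → F) :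
    ∑ a : F, #(collisionPairs fun x => φ x - a * x) =
      Fintype.card F * (Fintype.card F - 1) := by
  have hslope : ∀ p ∈ (univ : Finset F).offDiag,
      #{a | φ p.1 - a * p.1 = φ p.2 - a * p.2} = 1 := by
    rintro ⟨x, y⟩ hxy
    have hxy : x - y ≠ 0 := sub_ne_zero.mpr (mem_offDiag.mp hxy).2.2
    rw [card_eq_one]
    refine ⟨(φ x - φ y) / (x - y), ext fun a => ?_⟩
    simp only [mem_filter, mem_univ, true_and, mem_singleton, eq_div_iff hxy]
    constructor <;> intro h <;> linear_combination -h
  calc ∑ a : F, #(collisionPairs fun x => φ x - a * x)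
      = ∑ p ∈ (univ : Finset F).offDiag, #{a | φ p.1 - a * p.1 = φ p.2 - a * p.2} := by
        simp only [collisionPairs, card_filter]
        exact sum_comm
    _ = Fintype.card F * (Fintype.card F - 1) := by
        rw [sum_congr rfl hslope, ← card_eq_sum_ones, offDiag_card, card_univ, Nat.mul_sub_one]

theorem natCard_nonHitting_eq_sum (φ : F → F) :
    Nat.card {ab : F × F // ∀ x, φ x - ab.1 * x - ab.2 ≠ 0} =
      ∑ a : F, (Fintype.card F - #(univ.image fun x => φ x - a * x)) := by
  rw [Nat.card_eq_fintype_card, Fintype.card_subtype, card_filter, Fintype.sum_prod_type]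
  refine sum_congr rfl fun a _ => ?_
  rw [← card_filter, ← card_compl]
  congr 1
  ext b
  simp [sub_eq_zero]

end Slopes

theorem stmt6_general (F : Type*) [Field F] [Fintype F] (f : Polynomial F) (d : ℕ)
    (hdeg : f.natDegree = d) (hd2 : 2 ≤ d) :
    Fintype.card F * (Fintype.card F - 1) / d
        ≤ Nat.card {ab : F × F // ∀ x : F, f.eval x - ab.1 * x - ab.2 ≠ 0} ∧
    Nat.card {ab : F × F // ∀ x : F, f.eval x - ab.1 * x - ab.2 ≠ 0}
        ≤ (d - 1) * (Fintype.card F * (Fintype.card F - 1)) / d := by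
  classical
  rw [natCard_nonHitting_eq_sum (f.eval ·)]
  set v₀ := ∑ a : F, (Fintype.card F - #(univ.image fun x => f.eval x - a * x))
  have hpairs := sum_card_collisionPairs_sub_mul (f.eval ·)
  have hlow : Fintype.card F * (Fintype.card F - 1) ≤ d * v₀ := by
    rw [← hpairs, mul_sum]
    exact sum_le_sum fun a _ => card_collisionPairs_le _ fun v =>
      hdeg ▸ card_eval_sub_mul_eq_le_natDegree (by omega) a v
  have hup : 2 * v₀ ≤ Fintype.card F * (Fintype.card F - 1) := by
    rw [← hpairs, mul_sum]
    exact sum_le_sum fun a _ => two_mul_card_sub_card_image_le _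
  refine ⟨Nat.div_le_of_le_mul hlow, (Nat.le_div_iff_mul_le (by omega)).mpr ?_⟩
  calc v₀ * d ≤ v₀ * (2 * (d - 1)) := Nat.mul_le_mul_left _ (by omega)
    _ = (d - 1) * (2 * v₀) := by ring
    _ ≤ (d - 1) * (Fintype.card F * (Fintype.card F - 1)) := Nat.mul_le_mul_left _ hup

/-- if `f` is a polynomial of degree `d` over `F_q` with `2 ≤ d ≤ q−1` and
`d ∣ q−1`, then `q(q−1)/d ≤ v_0(f) ≤ (d−1)·q(q−1)/d`, where `v_0(f)` is the number of
pairs `(a,b)` such that `f(x) − a·x − b = 0` has no solution. -/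
theorem stmt6 (F : Type*) [Field F] [Fintype F] (f : Polynomial F) (d : ℕ)
    (hdeg : f.natDegree = d) (hd2 : 2 ≤ d) (hdq : d ≤ Fintype.card F - 1)
    (hdvd : d ∣ Fintype.card F - 1) :
    Fintype.card F * (Fintype.card F - 1) / d
        ≤ Nat.card {ab : F × F // ∀ x : F, f.eval x - ab.1 * x - ab.2 ≠ 0} ∧
    Nat.card {ab : F × F // ∀ x : F, f.eval x - ab.1 * x - ab.2 ≠ 0}
        ≤ (d - 1) * (Fintype.card F * (Fintype.card F - 1)) / d :=
  stmt6_general F f d hdeg hd2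
end

section
/- Let q = p^s be a prime power and let 0 ≤ i ≤ s−1 with h = gcd(i,s). Consider the map x ↦ x^{p^i} on F_q, and for c ∈ F_q let N_b(c) = |{x ∈ F_q : x^{p^i} − c·x = b}|. If c is a nonzero (p^h − 1)-th power in F_q, i.e. c ∈ C_0^{(p^h−1,q)}, then exactly p^{s−h} elements b ∈ F_q satisfy N_b(c) = p^h and the remaining p^s − p^{s−h} elements b satisfy N_b(c) = 0. If c ∉ C_0^{(p^h−1,q)}, i.e. c = 0 or c is not a (p^h − 1)-th power in F_q^*, then N_b(c) = 1 for every b ∈ F_q. -/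
set_option linter.unusedSectionVars false

lemma gcd_pow_sub_one (p : ℕ) (hp : 0 < p) : ∀ i s : ℕ, Nat.gcd (p ^ i - 1) (p ^ s - 1) = p ^ Nat.gcd i s - 1 := by
  intro i
  induction i using Nat.strong_induction_on with
  | _ i ih =>
    intro s
    rcases Nat.eq_zero_or_pos i with hi | hi
    · subst hi; simp
    · have hr : s % i < i := Nat.mod_lt _ hi
      have hd : (p ^ i - 1) ∣ p ^ (i * (s / i)) - 1 := by
        simpa [pow_mul] using Nat.sub_dvd_pow_sub_pow (p ^ i) 1 (s / i)
      obtain ⟨M, hM⟩ := hd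
      have h1 : 1 ≤ p ^ (s % i) := Nat.one_le_pow _ _ hp
      have h2 : 1 ≤ p ^ (i * (s / i)) := Nat.one_le_pow _ _ hp
      have hs : i * (s / i) + s % i = s := Nat.div_add_mod s i
      have e2 : p ^ s = p ^ (i * (s / i)) * p ^ (s % i) := by rw [← pow_add, hs]
      have e1 : (p ^ i - 1) * (M * p ^ (s % i)) = p ^ (i * (s / i)) * p ^ (s % i) - p ^ (s % i) := by
        rw [← mul_assoc, ← hM, Nat.sub_mul, one_mul]
      have hBX : p ^ (s % i) ≤ p ^ (i * (s / i)) * p ^ (s % i) :=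
        Nat.le_mul_of_pos_left _ h2
      rw [mul_comm] at e1
      have key : p ^ s - 1 = (p ^ (s % i) - 1) + M * p ^ (s % i) * (p ^ i - 1) := by
        omega
      rw [key, Nat.gcd_add_mul_right_right, Nat.gcd_comm, ih _ hr i, Nat.gcd_rec i s]

lemma exists_pow_iff_gcd {G : Type*} [CommGroup G] [Finite G] (n : ℕ) (a : G) :
    (∃ u : G, u ^ n = a) ↔ ∃ v : G, v ^ Nat.gcd n (Nat.card G) = a := by
  set m := Nat.card G with hm
  constructor
  · rintro ⟨u, rfl⟩
    obtain ⟨e, he⟩ := Nat.gcd_dvd_left n m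
    exact ⟨u ^ e, by rw [← pow_mul, mul_comm, ← he]⟩
  · rintro ⟨v, rfl⟩
    have hv : v ^ (m : ℤ) = 1 := by
      rw [zpow_natCast]; exact pow_card_eq_one'
    refine ⟨v ^ Nat.gcdA n m, ?_⟩
    have : ((Nat.gcd n m : ℕ) : ℤ) = n * Nat.gcdA n m + m * Nat.gcdB n m := Nat.gcd_eq_gcd_ab n m
    calc (v ^ Nat.gcdA n m) ^ n = v ^ (Nat.gcdA n m * n) := by
          rw [← zpow_natCast (v ^ Nat.gcdA n m) n, ← zpow_mul]
      _ = v ^ ((n : ℤ) * Nat.gcdA n m + m * Nat.gcdB n m) := by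
          rw [zpow_add, zpow_mul v (m : ℤ), hv, one_zpow, mul_one, mul_comm]
      _ = v ^ ((Nat.gcd n m : ℕ) : ℤ) := by rw [← this]
      _ = v ^ Nat.gcd n m := zpow_natCast v _

lemma card_pow_solutions {G : Type*} [CommGroup G] [Finite G] [IsCyclic G] (n : ℕ) (a : G)
    (ha : ∃ u : G, u ^ n = a) :
    Nat.card {u : G // u ^ n = a} = Nat.gcd n (Nat.card G) := by
  obtain ⟨u₀, hu₀⟩ := ha
  have e : {u : G // u ^ n = a} ≃ {v : G // v ^ n = 1} :=
    { toFun := fun u => ⟨u.1 * u₀⁻¹, by rw [mul_pow, u.2, inv_pow, ← hu₀, mul_inv_cancel]⟩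
      invFun := fun v => ⟨v.1 * u₀, by rw [mul_pow, v.2, one_mul, hu₀]⟩
      left_inv := fun u => by ext; simp
      right_inv := fun v => by ext; simp }
  rw [Nat.card_congr e]
  set φ : G →* G := powMonoidHom n with hφ
  obtain ⟨g, hg⟩ := IsCyclic.exists_generator (α := G)
  have hog : orderOf g = Nat.card G := orderOf_eq_card_of_forall_mem_zpowers hg
  set m := Nat.card G with hm
  have comm : ∀ k : ℤ, (g ^ k) ^ n = (g ^ n) ^ k := fun k => by
    rw [← zpow_natCast (g ^ k) n, ← zpow_mul, mul_comm, zpow_mul, zpow_natCast]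
  have hrange : φ.range = Subgroup.zpowers (g ^ n) := by
    ext x
    constructor
    · rintro ⟨y, rfl⟩
      obtain ⟨k, rfl⟩ := hg y
      exact ⟨k, by simp only [hφ, powMonoidHom_apply]; rw [comm]⟩
    · rintro ⟨k, rfl⟩
      exact ⟨g ^ k, by simp only [hφ, powMonoidHom_apply]; rw [comm]⟩
  have hcr : Nat.card φ.range = m / Nat.gcd m n := by
    rw [hrange, Nat.card_zpowers, orderOf_pow, hog]
  have hker : Nat.card {v : G // v ^ n = 1} = Nat.card φ.ker :=
    Nat.card_congr (Equiv.subtypeEquivRight fun v => by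
      simp [hφ, MonoidHom.mem_ker, powMonoidHom_apply])
  have hquot : Nat.card G = Nat.card φ.range * Nat.card φ.ker := by
    rw [Subgroup.card_eq_card_quotient_mul_card_subgroup φ.ker,
      Nat.card_congr (QuotientGroup.quotientKerEquivRange φ).toEquiv]
  have hm0 : 0 < m := Nat.card_pos
  have hgd : Nat.gcd m n ∣ m := Nat.gcd_dvd_left m n
  have hgd0 : 0 < Nat.gcd m n := Nat.gcd_pos_of_pos_left n hm0
  have hq0 : 0 < m / Nat.gcd m n := Nat.div_pos (Nat.le_of_dvd hm0 hgd) hgd0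
  rw [hker, Nat.gcd_comm]
  have := hquot
  rw [hcr, ← hm] at this
  have h2 : m / Nat.gcd m n * Nat.gcd m n = m := Nat.div_mul_cancel hgd
  exact (Nat.eq_of_mul_eq_mul_left hq0 (by rw [← this, h2])).symm

lemma card_sol {F : Type*} [Field F] [Fintype F] (P : F → Prop) (hP : P 0) :
    Nat.card {x : F // P x} = 1 + Nat.card {u : Fˣ // P (u : F)} := by
  classical
  have e1 : {x : F // P x} ≃ {x : {x : F // P x} // x.1 = 0} ⊕ {x : {x : F // P x} // ¬ x.1 = 0} :=
    (Equiv.sumCompl _).symm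
  rw [Nat.card_congr e1, Nat.card_sum]
  congr 1
  · rw [Nat.card_eq_one_iff_unique]
    exact ⟨⟨fun a b => Subtype.ext (Subtype.ext (a.2.trans b.2.symm))⟩, ⟨⟨⟨0, hP⟩, rfl⟩⟩⟩
  · refine Nat.card_congr ?_
    exact
      { toFun := fun x => ⟨Units.mk0 x.1.1 x.2, by simpa using x.1.2⟩
        invFun := fun u => ⟨⟨(u.1 : F), u.2⟩, u.1.ne_zero⟩
        left_inv := fun x => by ext; simp
        right_inv := fun u => by ext; simp }

/-- for `q = p^s`, `0 ≤ i ≤ s−1`, `h = gcd(i,s)`, and the map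
`x ↦ x^{p^i} − c·x` on `F_q`: if `c` is a nonzero `(p^h−1)`-th power then exactly
`p^{s−h}` elements `b` have `p^h` preimages and the remaining `p^s − p^{s−h}` elements
have none; otherwise every `b` has exactly one preimage. -/
theorem stmt7 (p s : ℕ) (hp : p.Prime) (F : Type*) [Field F] [Fintype F]
    (hF : Fintype.card F = p ^ s) (i h : ℕ) (hi : i < s) (hh : h = Nat.gcd i s) (c : F) :
    ((∃ y : F, y ≠ 0 ∧ y ^ (p ^ h - 1) = c) →
      Nat.card {b : F // Nat.card {x : F // x ^ p ^ i - c * x = b} = p ^ h} = p ^ (s - h) ∧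
      Nat.card {b : F // Nat.card {x : F // x ^ p ^ i - c * x = b} = 0}
        = p ^ s - p ^ (s - h)) ∧
    ((¬ ∃ y : F, y ≠ 0 ∧ y ^ (p ^ h - 1) = c) →
      ∀ b : F, Nat.card {x : F // x ^ p ^ i - c * x = b} = 1) := by
  classical
  haveI : Fact p.Prime := ⟨hp⟩
  -- characteristic
  haveI hchar : CharP F p := by
    have h1 : CharP F (ringChar F) := ringChar.charP F
    have hrp : (ringChar F).Prime := CharP.char_is_prime F (ringChar F)
    have hdvd : ringChar F ∣ p ^ s := by
      rw [← hF]
      exact (CharP.cast_eq_zero_iff F (ringChar F) (Fintype.card F)).mp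
        (Nat.cast_card_eq_zero F)
    have : ringChar F = p := (Nat.prime_dvd_prime_iff_eq hrp hp).mp (hrp.dvd_of_dvd_pow hdvd)
    rwa [this] at h1
  -- basic numeric facts
  have hs0 : 0 < s := lt_of_le_of_lt (Nat.zero_le i) hi
  have hhdvd : h ∣ s := hh ▸ Nat.gcd_dvd_right i s
  have hhs : h ≤ s := Nat.le_of_dvd hs0 hhdvd
  have hh0 : 0 < h := by
    rcases Nat.eq_zero_or_pos h with h0 | h0
    · exfalso; rw [hh] at h0; have := Nat.eq_zero_of_gcd_eq_zero_right h0; omega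
    · exact h0
  have hph1 : 1 < p ^ h := Nat.one_lt_pow (by omega) hp.one_lt
  have hpi1 : 1 ≤ p ^ i := Nat.one_le_pow _ _ hp.pos
  set n := p ^ i - 1 with hn
  -- the additive map
  set f : F →+ F := AddMonoidHom.mk' (fun x => x ^ p ^ i - c * x)
    (fun a b => by
      show (a + b) ^ p ^ i - c * (a + b) = (a ^ p ^ i - c * a) + (b ^ p ^ i - c * b)
      rw [add_pow_char_pow]; ring) with hfdef
  have hfx : ∀ x : F, f x = x ^ p ^ i - c * x := fun x => rfl
  set N : F → ℕ := fun b => Nat.card {x : F // x ^ p ^ i - c * x = b} with hN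
  have hNf : ∀ b : F, N b = Nat.card {x : F // f x = b} := fun b =>
    Nat.card_congr (Equiv.subtypeEquivRight fun x => by rw [hfx])
  -- translation of fibers
  have hfib : ∀ a b : F, f a = b → Nat.card {x : F // f x = b} = Nat.card {x : F // f x = 0} := by
    intro a b hab
    exact Nat.card_congr
      { toFun := fun x => ⟨x.1 - a, by rw [map_sub, x.2, hab, sub_self]⟩
        invFun := fun x => ⟨x.1 + a, by rw [map_add, x.2, hab, zero_add]⟩
        left_inv := fun x => by ext; simp
        right_inv := fun x => by ext; simp }
  set K : ℕ := Nat.card {x : F // f x = 0} with hK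
  -- counting identity
  have hcount : Nat.card f.range * K = p ^ s := by
    have h1 : K = Nat.card f.ker :=
      Nat.card_congr (Equiv.subtypeEquivRight fun x => (f.mem_ker).symm)
    have h2 : Nat.card F = Nat.card (F ⧸ f.ker) * Nat.card f.ker :=
      AddSubgroup.card_eq_card_quotient_mul_card_addSubgroup f.ker
    have h3 : Nat.card (F ⧸ f.ker) = Nat.card f.range :=
      Nat.card_congr (QuotientAddGroup.quotientKerEquivRange f).toEquiv
    rw [h1, ← h3, ← h2, Nat.card_eq_fintype_card, hF]
  -- units count
  have hm : Nat.card Fˣ = p ^ s - 1 := by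
    rw [Nat.card_units, Nat.card_eq_fintype_card, hF]
  have hgcd' : Nat.gcd n (Nat.card Fˣ) = p ^ h - 1 := by
    rw [hm, hn, hh]; exact gcd_pow_sub_one p hp.pos i s
  -- bridge for nonzero c
  have hbridge : ∀ (hc0 : c ≠ 0) (u : Fˣ),
      ((u : F) ^ p ^ i - c * u = 0) ↔ u ^ n = Units.mk0 c hc0 := by
    intro hc0 u
    rw [sub_eq_zero]
    have hsplit : (u : F) ^ p ^ i = (u : F) ^ n * u := by
      rw [← pow_succ, hn]
      congr 1
      omega
    constructor
    · intro hcu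
      ext
      simp only [Units.val_pow_eq_pow_val, Units.val_mk0]
      apply mul_right_cancel₀ u.ne_zero
      rw [← hsplit, hcu]
    · intro hcu
      have := congrArg Units.val hcu
      simp only [Units.val_pow_eq_pow_val, Units.val_mk0] at this
      rw [hsplit, this]
  -- Case A : c is a nonzero (p^h-1)-power  →  K = p^h
  have hKA : (∃ y : F, y ≠ 0 ∧ y ^ (p ^ h - 1) = c) → K = p ^ h := by
    rintro ⟨y, hy0, hyc⟩
    have hc0 : c ≠ 0 := by rw [← hyc]; exact pow_ne_zero _ hy0
    have hv : ∃ v : Fˣ, v ^ (p ^ h - 1) = Units.mk0 c hc0 :=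
      ⟨Units.mk0 y hy0, by ext; simp [hyc]⟩
    have hex : ∃ u : Fˣ, u ^ n = Units.mk0 c hc0 :=
      (exists_pow_iff_gcd n _).mpr (by rwa [hgcd'])
    have hcardu : Nat.card {u : Fˣ // u ^ n = Units.mk0 c hc0} = p ^ h - 1 := by
      rw [card_pow_solutions n _ hex, hgcd']
    have : K = 1 + Nat.card {u : Fˣ // f (u : F) = 0} :=
      card_sol (fun x => f x = 0) (by simp)
    rw [this]
    have hb : Nat.card {u : Fˣ // f (u : F) = 0}
        = Nat.card {u : Fˣ // u ^ n = Units.mk0 c hc0} :=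
      Nat.card_congr (Equiv.subtypeEquivRight fun u => by rw [hfx]; exact hbridge hc0 u)
    rw [hb, hcardu]
    omega
  -- Case B : otherwise K = 1
  have hKB : (¬ ∃ y : F, y ≠ 0 ∧ y ^ (p ^ h - 1) = c) → K = 1 := by
    intro hc
    have : K = 1 + Nat.card {u : Fˣ // f (u : F) = 0} :=
      card_sol (fun x => f x = 0) (by simp)
    rw [this]
    have hempty : IsEmpty {u : Fˣ // f (u : F) = 0} := by
      constructor
      rintro ⟨u, hu⟩
      rw [hfx] at hu
      by_cases hc0 : c = 0
      · rw [hc0, zero_mul, sub_zero] at hu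
        exact u.ne_zero ((pow_eq_zero_iff (by positivity)).mp hu)
      · have hun : u ^ n = Units.mk0 c hc0 := (hbridge hc0 u).mp hu
        obtain ⟨v, hv⟩ := (exists_pow_iff_gcd n _).mp ⟨u, hun⟩
        rw [hgcd'] at hv
        refine hc ⟨(v : F), v.ne_zero, ?_⟩
        have := congrArg Units.val hv
        simpa using this
    rw [Nat.card_of_isEmpty]
  -- fiber values
  have hfib1 : ∀ b : F, b ∈ f.range → N b = K := by
    intro b hb
    obtain ⟨a, ha⟩ := hb
    rw [hNf]
    exact hfib a b ha
  have hfib0 : ∀ b : F, b ∉ f.range → N b = 0 := by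
    intro b hb
    rw [hNf]
    haveI : IsEmpty {x : F // f x = b} := ⟨fun x => hb ⟨x.1, x.2⟩⟩
    exact Nat.card_of_isEmpty
  constructor
  · -- Case A conclusion
    intro hc
    have hKph := hKA hc
    have hrangecard : Nat.card f.range = p ^ (s - h) := by
      have hmul : Nat.card f.range * p ^ h = p ^ (s - h) * p ^ h := by
        rw [← pow_add, Nat.sub_add_cancel hhs, ← hcount, hKph]
      exact Nat.eq_of_mul_eq_mul_right (pow_pos hp.pos h) hmul
    have hiff : ∀ b : F, N b = p ^ h ↔ b ∈ f.range := by
      intro b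
      constructor
      · intro hb
        by_contra hnb
        rw [hfib0 b hnb] at hb
        omega
      · intro hb
        rw [hfib1 b hb, hKph]
    constructor
    · calc Nat.card {b : F // N b = p ^ h}
          = Nat.card {b : F // b ∈ f.range} :=
            Nat.card_congr (Equiv.subtypeEquivRight hiff)
        _ = Nat.card f.range := Nat.card_congr (Equiv.subtypeEquivRight fun b => Iff.rfl)
        _ = p ^ (s - h) := hrangecard
    · have hiff0 : ∀ b : F, N b = 0 ↔ ¬ b ∈ f.range := by
        intro b
        constructor
        · intro hb hmem
          rw [hfib1 b hmem, hKph] at hb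
          omega
        · exact hfib0 b
      calc Nat.card {b : F // N b = 0}
          = Nat.card {b : F // ¬ b ∈ f.range} :=
            Nat.card_congr (Equiv.subtypeEquivRight hiff0)
        _ = Fintype.card {b : F // ¬ b ∈ f.range} := Nat.card_eq_fintype_card
        _ = Fintype.card F - Fintype.card {b : F // b ∈ f.range} :=
            Fintype.card_subtype_compl _
        _ = p ^ s - p ^ (s - h) := by
            have hcc : Fintype.card {b : F // b ∈ f.range} = p ^ (s - h) := by
              rw [← Nat.card_eq_fintype_card]
              exact (Nat.card_congr (Equiv.subtypeEquivRight fun b => Iff.rfl)).trans hrangecard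
            rw [hF, hcc]
  · -- Case B conclusion
    intro hc b
    have hK1 := hKB hc
    -- f is injective
    have hinj : Function.Injective f := by
      intro x y hxy
      have hsub : f (x - y) = 0 := by rw [map_sub, hxy, sub_self]
      obtain ⟨hsing, _⟩ := Nat.card_eq_one_iff_unique.mp hK1
      have := hsing.elim ⟨x - y, hsub⟩ ⟨0, map_zero f⟩
      have h0 : x - y = 0 := congrArg Subtype.val this
      exact sub_eq_zero.mp h0
    have hsurj : Function.Surjective f := Finite.surjective_of_injective hinj
    obtain ⟨a, ha⟩ := hsurj b
    show N b = 1
    rw [hNf, hfib a b ha]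
    exact hK1
end

section
/- Let q = p^s be an odd prime power. For i,j ∈ {0,1}, define C_{i,j}^q = {x ∈ F_q* : 1−x ∈ C_i^{(2,q)} and 1+x ∈ C_j^{(2,q)}}, where C_0^{(2,q)} is the set of nonzero squares and C_1^{(2,q)} the set of nonsquares. Let δ = 1 if 2 is a square in F_q and δ = 0 otherwise. If q ≡ 1 (mod 4), then |C_{0,0}^q| = (q−5)/4 − δ, |C_{1,1}^q| = (q−5)/4 + δ, and |C_{0,1}^q| = |C_{1,0}^q| = (q−1)/4. If q ≡ 3 (mod 4), then |C_{0,0}^q| = (q−3)/4 − δ, |C_{1,1}^q| = (q−3)/4 + δ, and |C_{0,1}^q| = |C_{1,0}^q| = (q−3)/4. -/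
open scoped Classical
open Finset

/-- `x` is a nonzero element of square-class `i`: class `0` = nonzero squares,
class `1` = nonsquares. -/
def sqClass {F : Type*} [Field F] (i : ℕ) (x : F) : Prop :=
  x ≠ 0 ∧ (IsSquare x ↔ i = 0)

/-- `C_{i,j}^q = {x ∈ F_q* : 1−x ∈ C_i^{(2,q)}, 1+x ∈ C_j^{(2,q)}}`. -/
noncomputable def Cij (F : Type*) [Field F] (i j : ℕ) : ℕ :=
  Nat.card {x : F // x ≠ 0 ∧ sqClass i (1 - x) ∧ sqClass j (1 + x)}

section Aux

variable {F : Type*} [Field F] [Fintype F] [DecidableEq F]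

lemma qc_inv (hF : ringChar F ≠ 2) : (quadraticChar F)⁻¹ = quadraticChar F := by
  ext a
  rw [MulChar.inv_apply_eq_inv]
  rcases quadraticChar_dichotomy (a := (a : F)) (Units.ne_zero a) with h | h
  · simp [h]
  · rw [h, show (-1 : ℤ) = ((-1 : ℤˣ) : ℤ) from rfl, Ring.inverse_unit]
    rfl

lemma jac_sum (hF : ringChar F ≠ 2) :
    ∑ x : F, quadraticChar F x * quadraticChar F (1 - x) =
      - quadraticChar F (-1) := by
  have := jacobiSum_nontrivial_inv (quadraticChar_ne_one hF)
  rwa [qc_inv hF, jacobiSum] at this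

end Aux

section Aux2

variable {F : Type*} [Field F] [Fintype F] [DecidableEq F]

lemma sum_shift (hF : ringChar F ≠ 2) :
    ∑ x : F, quadraticChar F (1 - x) * quadraticChar F (1 + x) =
      - quadraticChar F (-1) := by
  have h2 : (2 : F) ≠ 0 := Ring.two_ne_zero hF
  have hsq : (quadraticChar F 2) ^ 2 = 1 := quadraticChar_sq_one h2
  rw [← jac_sum hF]
  refine (Fintype.sum_equiv ((Equiv.mulLeft₀ 2 h2).trans (Equiv.addRight (-1 : F)))
    (fun y => quadraticChar F y * quadraticChar F (1 - y)) _ (fun y => ?_)).symm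
  have e1 : (1 : F) - (2 * y + -1) = 2 * (1 - y) := by ring
  have e2 : (1 : F) + (2 * y + -1) = 2 * y := by ring
  simp only [Equiv.trans_apply, Equiv.mulLeft₀_apply, Equiv.coe_addRight, e1, e2, map_mul]
  linear_combination -(quadraticChar F y * quadraticChar F (1 - y)) * hsq

lemma key (hF : ringChar F ≠ 2) (ε η : ℤ) (hε : ε = 1 ∨ ε = -1) (hη : η = 1 ∨ η = -1) :
    ((Finset.univ.filter (fun x : F => x ≠ 0 ∧ quadraticChar F (1 - x) = ε ∧
        quadraticChar F (1 + x) = η)).card : ℤ) * 4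
      = (Fintype.card F : ℤ) - ε * η * quadraticChar F (-1) - (1 + ε) * (1 + η) - 2
        - (ε + η) * quadraticChar F 2 := by
  set χ := quadraticChar F with hχ
  have hne : (1 : F) ≠ -1 := fun h => Ring.neg_one_ne_one_of_char_ne_two hF h.symm
  have hε2 : ε * ε = 1 := by rcases hε with h | h <;> simp [h]
  have hη2 : η * η = 1 := by rcases hη with h | h <;> simp [h]
  set f : F → ℤ := fun x => (1 + ε * χ (1 - x)) * (1 + η * χ (1 + x)) with hf
  -- total sum
  have hs1 : ∑ x : F, χ (1 - x) = 0 := by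
    rw [← quadraticChar_sum_zero hF]
    exact Fintype.sum_equiv (Equiv.subLeft 1) _ _ (fun x => rfl)
  have hs2 : ∑ x : F, χ (1 + x) = 0 := by
    rw [← quadraticChar_sum_zero hF]
    exact Fintype.sum_equiv (Equiv.addLeft 1) _ _ (fun x => rfl)
  have hs3 : ∑ x : F, χ (1 - x) * χ (1 + x) = - χ (-1) := sum_shift hF
  have htot : ∑ x : F, f x = (Fintype.card F : ℤ) - ε * η * χ (-1) := by
    have : ∀ x : F, f x = 1 + ε * χ (1 - x) + η * χ (1 + x)
        + (ε * η) * (χ (1 - x) * χ (1 + x)) := fun x => by simp only [hf]; ring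
    rw [Finset.sum_congr rfl (fun x _ => this x)]
    rw [Finset.sum_add_distrib, Finset.sum_add_distrib, Finset.sum_add_distrib,
      ← Finset.mul_sum, ← Finset.mul_sum, ← Finset.mul_sum, hs1, hs2, hs3]
    simp only [Finset.sum_const, Finset.card_univ, nsmul_eq_mul, mul_one]
    ring
  -- split off 0, 1, -1
  set T : Finset F := {0, 1, -1} with hT
  have hsub : T ⊆ Finset.univ := Finset.subset_univ T
  have hsplit : ∑ x ∈ Finset.univ \ T, f x + ∑ x ∈ T, f x = ∑ x : F, f x :=
    Finset.sum_sdiff hsub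
  have hTsum : ∑ x ∈ T, f x = (1 + ε) * (1 + η) + (1 + η * χ 2) + (1 + ε * χ 2) := by
    have h01 : (0 : F) ≠ 1 := zero_ne_one
    have h0m1 : (0 : F) ≠ -1 := fun h => one_ne_zero (α := F) (by linear_combination h)
    rw [hT]
    rw [Finset.sum_insert (by simp [h01, h0m1]), Finset.sum_insert (by simp [hne]),
      Finset.sum_singleton]
    have : (1 : F) - 0 = 1 := by ring
    have e1 : (1 : F) + 1 = 2 := by norm_num
    have e2 : (1 : F) - -1 = 2 := by ring
    simp only [hf, sub_zero, add_zero, sub_self, e1, e2, add_neg_cancel,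
      map_one, quadraticChar_zero, hχ]
    ring
  -- the filtered set
  have hAeq : Finset.univ.filter (fun x : F => x ≠ 0 ∧ χ (1 - x) = ε ∧ χ (1 + x) = η)
      = (Finset.univ \ T).filter (fun x : F => χ (1 - x) = ε ∧ χ (1 + x) = η) := by
    ext x
    simp only [Finset.mem_filter, Finset.mem_sdiff, Finset.mem_univ, true_and, hT,
      Finset.mem_insert, Finset.mem_singleton]
    constructor
    · rintro ⟨h0, h1, h2⟩
      refine ⟨?_, h1, h2⟩
      push_neg
      refine ⟨h0, ?_, ?_⟩
      · rintro rfl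
        rw [sub_self] at h1
        rcases hε with h | h <;> rw [h] at h1 <;> simp [quadraticChar_zero, hχ] at h1
      · rintro rfl
        rw [add_neg_cancel] at h2
        rcases hη with h | h <;> rw [h] at h2 <;> simp [quadraticChar_zero, hχ] at h2
    · rintro ⟨h0, h1, h2⟩
      push_neg at h0
      exact ⟨h0.1, h1, h2⟩
  have hSsum : ∑ x ∈ Finset.univ \ T, f x
      = ((Finset.univ.filter (fun x : F => x ≠ 0 ∧ χ (1 - x) = ε ∧ χ (1 + x) = η)).card : ℤ) * 4 := by
    rw [hAeq]
    rw [← Finset.sum_filter_add_sum_filter_not (Finset.univ \ T)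
      (fun x : F => χ (1 - x) = ε ∧ χ (1 + x) = η) f]
    have hA4 : ∑ x ∈ (Finset.univ \ T).filter (fun x : F => χ (1 - x) = ε ∧ χ (1 + x) = η), f x
        = ((Finset.univ \ T).filter (fun x : F => χ (1 - x) = ε ∧ χ (1 + x) = η)).card * 4 := by
      rw [Finset.sum_congr rfl (fun x hx => ?_), Finset.sum_const, nsmul_eq_mul]
      rw [Finset.mem_filter] at hx
      obtain ⟨-, ha, hb⟩ := hx
      show f x = 4
      rw [hf]; dsimp only; rw [ha, hb, hε2, hη2]; norm_num
    have hB0 : ∑ x ∈ (Finset.univ \ T).filter (fun x : F => ¬(χ (1 - x) = ε ∧ χ (1 + x) = η)), f x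
        = 0 := by
      refine Finset.sum_eq_zero (fun x hx => ?_)
      rw [Finset.mem_filter, Finset.mem_sdiff] at hx
      obtain ⟨⟨-, hxT⟩, hnot⟩ := hx
      rw [hT] at hxT
      simp only [Finset.mem_insert, Finset.mem_singleton] at hxT
      push_neg at hxT
      obtain ⟨-, hx1, hxm1⟩ := hxT
      have hu : (1 : F) - x ≠ 0 := sub_ne_zero.mpr (fun h => hx1 h.symm)
      have hv : (1 : F) + x ≠ 0 := fun h => hxm1 (by linear_combination h - (1:F))
      rw [not_and_or] at hnot
      rcases hnot with h | h
      · have : χ (1 - x) = -ε := by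
          have hd := quadraticChar_dichotomy hu
          rw [← hχ] at hd
          rcases hd with hd | hd <;> rcases hε with he | he <;> rw [he] at h ⊢ <;> omega
        rw [hf]; dsimp only; rw [this]
        have : 1 + ε * -ε = 0 := by rw [mul_neg, hε2]; ring
        rw [this, zero_mul]
      · have : χ (1 + x) = -η := by
          have hd := quadraticChar_dichotomy hv
          rw [← hχ] at hd
          rcases hd with hd | hd <;> rcases hη with he | he <;> rw [he] at h ⊢ <;> omega
        rw [hf]; dsimp only; rw [this]
        have : 1 + η * -η = 0 := by rw [mul_neg, hη2]; ring
        rw [this, mul_zero]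
    rw [hA4, hB0, add_zero]
  have := hsplit
  rw [hSsum, hTsum, htot] at this
  linarith [this]

end Aux2

section Main

variable {F : Type*} [Field F] [Fintype F] [DecidableEq F]

lemma sqClass_zero_iff (u : F) : sqClass 0 u ↔ quadraticChar F u = 1 := by
  constructor
  · rintro ⟨hu, hsq⟩
    exact (quadraticChar_one_iff_isSquare hu).mpr (hsq.mpr rfl)
  · intro h
    have hu : u ≠ 0 := by
      rintro rfl; rw [quadraticChar_zero] at h; exact one_ne_zero h.symm
    exact ⟨hu, by simp [(quadraticChar_one_iff_isSquare hu).mp h]⟩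

lemma sqClass_one_iff (u : F) : sqClass 1 u ↔ quadraticChar F u = -1 := by
  constructor
  · rintro ⟨hu, hsq⟩
    refine quadraticChar_neg_one_iff_not_isSquare.mpr (fun h => ?_)
    exact one_ne_zero (hsq.mp h)
  · intro h
    have hu : u ≠ 0 := by
      rintro rfl; rw [quadraticChar_zero] at h; norm_num at h
    refine ⟨hu, ⟨fun hs => absurd hs (quadraticChar_neg_one_iff_not_isSquare.mp h),
      fun h10 => by norm_num at h10⟩⟩

/-- `e 0 = 1`, `e 1 = -1`. -/
private def eps : ℕ → ℤ := fun i => if i = 0 then 1 else -1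

lemma sqClass_iff (i : ℕ) (hi : i = 0 ∨ i = 1) (u : F) :
    sqClass i u ↔ quadraticChar F u = eps i := by
  rcases hi with rfl | rfl
  · simpa [eps] using sqClass_zero_iff u
  · simpa [eps] using sqClass_one_iff u

lemma Cij_eq_card (i j : ℕ) (hi : i = 0 ∨ i = 1) (hj : j = 0 ∨ j = 1) :
    Cij F i j = (Finset.univ.filter (fun x : F => x ≠ 0 ∧
      quadraticChar F (1 - x) = eps i ∧ quadraticChar F (1 + x) = eps j)).card := by
  rw [Cij, Nat.card_eq_fintype_card]
  rw [Fintype.card_subtype]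
  refine Finset.card_bij (fun x _ => x) (fun x hx => ?_) (fun _ _ _ _ h => h)
    (fun x hx => ⟨x, ?_, rfl⟩)
  · simp only [Finset.mem_filter, Finset.mem_univ, true_and] at hx ⊢
    exact ⟨hx.1, (sqClass_iff i hi _).mp hx.2.1, (sqClass_iff j hj _).mp hx.2.2⟩
  · simp only [Finset.mem_filter, Finset.mem_univ, true_and] at hx ⊢
    exact ⟨hx.1, (sqClass_iff i hi _).mpr hx.2.1, (sqClass_iff j hj _).mpr hx.2.2⟩

end Main

private lemma eps_zero : eps 0 = 1 := rfl
private lemma eps_one : eps 1 = -1 := rfl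


/-- sizes of the sets `C_{i,j}^q` for `q` odd, where
`δ = 1` if `2` is a square in `F_q` and `δ = 0` otherwise. -/
theorem stmt12 (F : Type*) [Field F] [Fintype F] (hq : Odd (Fintype.card F))
    (δ : ℕ) (hδ : δ = if IsSquare (2 : F) then 1 else 0) :
    (Fintype.card F % 4 = 1 →
      Cij F 0 0 = (Fintype.card F - 5) / 4 - δ ∧
      Cij F 1 1 = (Fintype.card F - 5) / 4 + δ ∧
      Cij F 0 1 = (Fintype.card F - 1) / 4 ∧
      Cij F 1 0 = (Fintype.card F - 1) / 4) ∧
    (Fintype.card F % 4 = 3 →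
      Cij F 0 0 = (Fintype.card F - 3) / 4 - δ ∧
      Cij F 1 1 = (Fintype.card F - 3) / 4 + δ ∧
      Cij F 0 1 = (Fintype.card F - 3) / 4 ∧
      Cij F 1 0 = (Fintype.card F - 3) / 4) := by
  classical
  have hF2 : ringChar F ≠ 2 := by
    intro h
    have h2 := FiniteField.even_card_iff_char_two.mp h
    obtain ⟨k, hk⟩ := hq
    omega
  have h2 : (2 : F) ≠ 0 := Ring.two_ne_zero hF2
  have hm1 : (-1 : F) ≠ 0 := by norm_num
  have hχ2 : ∃ c : ℤ, quadraticChar F 2 = c ∧ ((IsSquare (2 : F) ∧ c = 1) ∨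
      (¬ IsSquare (2 : F) ∧ c = -1)) := by
    by_cases h2s : IsSquare (2 : F)
    · exact ⟨1, (quadraticChar_one_iff_isSquare h2).mpr h2s, Or.inl ⟨h2s, rfl⟩⟩
    · exact ⟨-1, quadraticChar_neg_one_iff_not_isSquare.mpr h2s, Or.inr ⟨h2s, rfl⟩⟩
  obtain ⟨c, hc, hcs⟩ := hχ2
  have hδc : (δ : ℤ) = (1 + c) / 2 := by
    rcases hcs with ⟨hs, rfl⟩ | ⟨hs, rfl⟩ <;> simp [hδ, hs]
  constructor <;> intro hmod
  · have hχm1 : quadraticChar F (-1) = 1 :=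
      (quadraticChar_one_iff_isSquare hm1).mpr (FiniteField.isSquare_neg_one_iff.mpr (by omega))
    have k00 := key (F := F) hF2 1 1 (Or.inl rfl) (Or.inl rfl)
    have k11 := key (F := F) hF2 (-1) (-1) (Or.inr rfl) (Or.inr rfl)
    have k01 := key (F := F) hF2 1 (-1) (Or.inl rfl) (Or.inr rfl)
    have k10 := key (F := F) hF2 (-1) 1 (Or.inr rfl) (Or.inl rfl)
    rw [hχm1, hc] at k00 k11 k01 k10
    refine ⟨?_, ?_, ?_, ?_⟩
    · rw [Cij_eq_card 0 0 (Or.inl rfl) (Or.inl rfl), eps_zero]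
      rcases hcs with ⟨-, rfl⟩ | ⟨-, rfl⟩ <;> omega
    · rw [Cij_eq_card 1 1 (Or.inr rfl) (Or.inr rfl), eps_one]
      rcases hcs with ⟨-, rfl⟩ | ⟨-, rfl⟩ <;> omega
    · rw [Cij_eq_card 0 1 (Or.inl rfl) (Or.inr rfl), eps_zero, eps_one]
      rcases hcs with ⟨-, rfl⟩ | ⟨-, rfl⟩ <;> omega
    · rw [Cij_eq_card 1 0 (Or.inr rfl) (Or.inl rfl), eps_zero, eps_one]
      rcases hcs with ⟨-, rfl⟩ | ⟨-, rfl⟩ <;> omega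
  · have hχm1 : quadraticChar F (-1) = -1 :=
      quadraticChar_neg_one_iff_not_isSquare.mpr
        (fun h => by have := FiniteField.isSquare_neg_one_iff.mp h; omega)
    have k00 := key (F := F) hF2 1 1 (Or.inl rfl) (Or.inl rfl)
    have k11 := key (F := F) hF2 (-1) (-1) (Or.inr rfl) (Or.inr rfl)
    have k01 := key (F := F) hF2 1 (-1) (Or.inl rfl) (Or.inr rfl)
    have k10 := key (F := F) hF2 (-1) 1 (Or.inr rfl) (Or.inl rfl)
    rw [hχm1, hc] at k00 k11 k01 k10
    refine ⟨?_, ?_, ?_, ?_⟩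
    · rw [Cij_eq_card 0 0 (Or.inl rfl) (Or.inl rfl), eps_zero]
      rcases hcs with ⟨-, rfl⟩ | ⟨-, rfl⟩ <;> omega
    · rw [Cij_eq_card 1 1 (Or.inr rfl) (Or.inr rfl), eps_one]
      rcases hcs with ⟨-, rfl⟩ | ⟨-, rfl⟩ <;> omega
    · rw [Cij_eq_card 0 1 (Or.inl rfl) (Or.inr rfl), eps_zero, eps_one]
      rcases hcs with ⟨-, rfl⟩ | ⟨-, rfl⟩ <;> omega
    · rw [Cij_eq_card 1 0 (Or.inr rfl) (Or.inl rfl), eps_zero, eps_one]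
      rcases hcs with ⟨-, rfl⟩ | ⟨-, rfl⟩ <;> omega
end

section
/- Let q be an odd prime power and c ∈ F_q* with neither 1−c nor 1+c equal to zero. Then x ↦ x^{(q+1)/2} − c·x is a bijection of F_q if and only if (1−c) and (1+c) lie in square-classes i and j of F_q* with i = j when q ≡ 1 (mod 4), and with i ≠ j when q ≡ 3 (mod 4). -/
/-- for `q` odd and `c ∈ F_q*` with `1−c ≠ 0` and `1+c ≠ 0`, the map
`x ↦ x^{(q+1)/2} − c·x` is a bijection of `F_q` if and only if `1−c` and `1+c` lie in
the same square-class when `q ≡ 1 (mod 4)`, and in different square-classes when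
`q ≡ 3 (mod 4)`. -/
theorem stmt14 (F : Type*) [Field F] [Fintype F] (hq : Odd (Fintype.card F))
    (c : F) (hc : c ≠ 0) (h1 : 1 - c ≠ 0) (h2 : 1 + c ≠ 0) :
    (Fintype.card F % 4 = 1 →
      (Function.Bijective (fun x : F => x ^ ((Fintype.card F + 1) / 2) - c * x) ↔
        (IsSquare (1 - c) ↔ IsSquare (1 + c)))) ∧
    (Fintype.card F % 4 = 3 →
      (Function.Bijective (fun x : F => x ^ ((Fintype.card F + 1) / 2) - c * x) ↔
        ¬ (IsSquare (1 - c) ↔ IsSquare (1 + c)))) := by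
  classical
  set q := Fintype.card F with hqdef
  have hq2 : q % 2 = 1 := Nat.odd_iff.mp hq
  have hchar : ringChar F ≠ 2 := by
    intro h
    have := FiniteField.even_card_of_char_two (F := F) h
    omega
  have hne : (-1 : F) ≠ 1 := Ring.neg_one_ne_one_of_char_ne_two hchar
  have hexp : (q + 1) / 2 = q / 2 + 1 := by omega
  have h2' : (-1 - c : F) ≠ 0 := by
    intro h; apply h2; linear_combination -h
  have hf : ∀ x : F, x ^ ((q + 1) / 2) - c * x = (x ^ (q / 2) - c) * x := by
    intro x; rw [hexp, pow_succ]; ring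
  have hfun : (fun x : F => x ^ ((q + 1) / 2) - c * x)
      = (fun x : F => (x ^ (q / 2) - c) * x) := funext hf
  have hA := FiniteField.pow_dichotomy hchar h1
  have hB := FiniteField.pow_dichotomy hchar h2
  have hM := FiniteField.pow_dichotomy hchar (neg_ne_zero.mpr (one_ne_zero (α := F)))
  -- nonzero elements map to nonzero elements
  have hM2 : (-1 : F) ^ (q / 2) * (-1 : F) ^ (q / 2) = 1 := by
    rw [← mul_pow]; norm_num
  have hB2 : (1 + c) ^ (q / 2) * (1 + c) ^ (q / 2) = 1 := by
    rcases hB with h | h <;> rw [h] <;> norm_num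
  have hfz : ∀ x : F, x ≠ 0 → (x ^ (q / 2) - c) ≠ 0 := by
    intro x hx
    rcases FiniteField.pow_dichotomy hchar hx with h | h <;> rw [h]
    · exact h1
    · exact h2'
  have key : Function.Bijective (fun x : F => x ^ ((q + 1) / 2) - c * x) ↔
      (-1 : F) ^ (q / 2) * (1 - c) ^ (q / 2) * (1 + c) ^ (q / 2) = 1 := by
    rw [hfun]
    by_cases hMAB : (-1 : F) ^ (q / 2) * (1 - c) ^ (q / 2) * (1 + c) ^ (q / 2) = 1
    · simp only [hMAB, iff_true]
      rw [← Finite.injective_iff_bijective]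
      intro x y hxy
      simp only at hxy
      by_cases hx : x = 0
      · subst hx
        simp only [mul_zero] at hxy
        by_contra hy
        exact mul_ne_zero (hfz y (Ne.symm hy)) (Ne.symm hy) hxy.symm
      by_cases hy : y = 0
      · subst hy
        simp only [mul_zero] at hxy
        exact absurd hxy (mul_ne_zero (hfz x hx) hx)
      rcases FiniteField.pow_dichotomy hchar hx with hxv | hxv <;>
        rcases FiniteField.pow_dichotomy hchar hy with hyv | hyv
      · rw [hxv, hyv] at hxy
        exact mul_left_cancel₀ h1 (by linear_combination hxy)
      · -- x square, y nonsquare: contradiction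
        exfalso
        rw [hxv, hyv] at hxy
        -- (1-c)*x = (-1-c)*y
        have e0 : (1 - c) * x = (-1 - c) * y := by linear_combination hxy
        have e1 : ((1 - c) * x) ^ (q / 2) = ((-1) * (1 + c) * y) ^ (q / 2) := by
          rw [show (-1 : F) * (1 + c) * y = (-1 - c) * y by ring, ← e0]
        rw [mul_pow, mul_pow, mul_pow, hxv, hyv] at e1
        apply hne
        linear_combination hMAB - (-1 : F) ^ (q / 2) * (1 + c) ^ (q / 2) * e1
          + ((1 + c) ^ (q / 2) * (1 + c) ^ (q / 2)) * hM2 + hB2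
      · exfalso
        rw [hxv, hyv] at hxy
        have e0 : (1 - c) * y = (-1 - c) * x := by linear_combination -hxy
        have e1 : ((1 - c) * y) ^ (q / 2) = ((-1) * (1 + c) * x) ^ (q / 2) := by
          rw [show (-1 : F) * (1 + c) * x = (-1 - c) * x by ring, ← e0]
        rw [mul_pow, mul_pow, mul_pow, hxv, hyv] at e1
        apply hne
        linear_combination hMAB - (-1 : F) ^ (q / 2) * (1 + c) ^ (q / 2) * e1
          + ((1 + c) ^ (q / 2) * (1 + c) ^ (q / 2)) * hM2 + hB2
      · rw [hxv, hyv] at hxy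
        exact mul_left_cancel₀ h2' (by linear_combination hxy)
    · simp only [hMAB, iff_false]
      -- the product is -1
      have hMAB' : (-1 : F) ^ (q / 2) * (1 - c) ^ (q / 2) * (1 + c) ^ (q / 2) = -1 := by
        rcases hA with hA | hA <;> rcases hB with hB | hB <;> rcases hM with hM | hM <;>
          rw [hA, hB, hM] at hMAB ⊢ <;> norm_num at hMAB <;> norm_num
      intro hbij
      obtain ⟨n, hn⟩ := FiniteField.exists_nonsquare (F := F) hchar
      have hn0 : n ≠ 0 := by rintro rfl; exact hn ⟨0, by simp⟩
      have hnh : n ^ (q / 2) = -1 := by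
        rcases FiniteField.pow_dichotomy hchar hn0 with h | h
        · exact absurd ((FiniteField.isSquare_iff hchar hn0).mpr h) hn
        · exact h
      set s : F := (-1) * (1 + c) * (1 - c)⁻¹ * n with hs
      have hs0 : s ≠ 0 := by
        apply mul_ne_zero (mul_ne_zero (mul_ne_zero (neg_ne_zero.mpr one_ne_zero) h2)
          (inv_ne_zero h1)) hn0
      have hAinv : ((1 - c) ^ (q / 2))⁻¹ = (1 - c) ^ (q / 2) := by
        rcases hA with hA | hA <;> rw [hA] <;> norm_num
      have hsh : s ^ (q / 2) = 1 := by
        rw [hs, mul_pow, mul_pow, mul_pow, inv_pow, hnh, hAinv]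
        linear_combination -hMAB'
      have hsn : s ≠ n := by
        intro h; rw [h, hnh] at hsh; exact hne hsh
      apply hsn
      apply hbij.injective
      simp only
      rw [hsh, hnh, hs]
      linear_combination (-(1 + c) * n) * mul_inv_cancel₀ h1
  have hsq1 : IsSquare (1 - c) ↔ (1 - c) ^ (q / 2) = 1 := FiniteField.isSquare_iff hchar h1
  have hsq2 : IsSquare (1 + c) ↔ (1 + c) ^ (q / 2) = 1 := FiniteField.isSquare_iff hchar h2
  constructor
  · intro hmod
    have hMval : (-1 : F) ^ (q / 2) = 1 :=
      Even.neg_one_pow (by rw [Nat.even_iff]; omega)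
    rw [key, hsq1, hsq2, hMval, one_mul]
    rcases hA with hA | hA <;> rcases hB with hB | hB <;> rw [hA, hB] <;>
      simp [hne, hne.symm] <;> norm_num <;> intro h <;>
        first | exact hne h.symm | exact hne h | skip
  · intro hmod
    have hMval : (-1 : F) ^ (q / 2) = -1 :=
      Odd.neg_one_pow (by rw [Nat.odd_iff]; omega)
    rw [key, hsq1, hsq2, hMval]
    rcases hA with hA | hA <;> rcases hB with hB | hB <;> rw [hA, hB] <;>
      simp [hne, hne.symm] <;> norm_num <;> intro h <;>
        first | exact hne h.symm | exact hne h | skip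
end

section
/- Let q be a prime power, f a polynomial over F_q, and c ∈ F_q. The point ⟨(1,c,0)⟩ of PG(2,q) is a nucleus of the (q+1)-set S_f = {⟨(x,f(x),1)⟩ : x ∈ F_q} ∪ {⟨(0,1,0)⟩} (i.e., every line through ⟨(1,c,0)⟩ meets S_f in exactly one point) if and only if x ↦ f(x) − c·x is a permutation of F_q. -/
/-- The projective point `⟨(x, y, 1)⟩`. -/
def ptAff {F : Type*} [Field F] (x y : F) : PG F :=
  Projectivization.mk F ![x, y, 1] (by intro h; simpa using congrFun h 2)

/-- The projective point `⟨(x, y, 0)⟩` at infinity, with `y ≠ 0` or `x ≠ 0`. -/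
def ptInf {F : Type*} [Field F] (c : F) : PG F :=
  Projectivization.mk F ![1, c, 0] (by intro h; simpa using congrFun h 0)

/-- The `(q+1)`-set `S_f = {⟨(x, f(x), 1)⟩ : x ∈ F_q} ∪ {⟨(0,1,0)⟩}`. -/
def Sf {F : Type*} [Field F] (f : Polynomial F) : Set (PG F) :=
  (Set.range fun x : F => ptAff x (f.eval x)) ∪
    {Projectivization.mk F ![0, 1, 0] (by intro h; simpa using congrFun h 1)}

section Aux
open Projectivization
variable {F : Type*} [Field F]

lemma exists_smul_rep (v : Fin 3 → F) (hv : v ≠ 0) :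
    ∃ a : Fˣ, a • v = (mk F v hv).rep :=
  (mk_eq_mk_iff F _ _ (rep_nonzero _) hv).mp (mk_rep _)

lemma pginc_mk_left (v : Fin 3 → F) (hv : v ≠ 0) (l : PG F) :
    PGIncident (mk F v hv) l ↔ ∑ j : Fin 3, v j * l.rep j = 0 := by
  obtain ⟨a, ha⟩ := exists_smul_rep v hv
  unfold PGIncident
  rw [← ha]
  simp only [Pi.smul_apply, Units.smul_def, smul_eq_mul, mul_assoc, ← Finset.mul_sum]
  exact Units.mul_right_eq_zero a

lemma pginc_mk_mk (v w : Fin 3 → F) (hv : v ≠ 0) (hw : w ≠ 0) :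
    PGIncident (mk F v hv) (mk F w hw) ↔ ∑ j : Fin 3, v j * w j = 0 := by
  obtain ⟨b, hb⟩ := exists_smul_rep w hw
  rw [pginc_mk_left, ← hb]
  simp only [Pi.smul_apply, Units.smul_def, smul_eq_mul, mul_left_comm, ← Finset.mul_sum]
  exact Units.mul_right_eq_zero b

lemma ptAff_inj {x y x' y' : F} (h : ptAff x y = ptAff x' y') : x = x' ∧ y = y' := by
  rw [ptAff, ptAff, mk_eq_mk_iff] at h
  obtain ⟨a, ha⟩ := h
  have h2 := congrFun ha 2
  have h0 := congrFun ha 0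
  have h1 := congrFun ha 1
  simp only [Pi.smul_apply, smul_eq_mul, Matrix.cons_val_zero, Matrix.cons_val_one,
    Matrix.head_cons, Matrix.cons_val_two, Matrix.tail_cons, Units.smul_def, smul_eq_mul] at h2 h0 h1
  simp at h2
  rw [show ((a : F)) = 1 from by simpa using h2] at h0 h1
  simp at h0 h1
  exact ⟨h0.symm, h1.symm⟩

lemma card_subtype_one_iff {α : Type*} (P : α → Prop) :
    Nat.card {x // P x} = 1 ↔ ∃! x, P x := by
  rw [Nat.card_eq_one_iff_unique]
  constructor
  · rintro ⟨hs, ⟨x, hx⟩⟩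
    exact ⟨x, hx, fun y hy => Subtype.ext_iff.mp (hs.elim ⟨y, hy⟩ ⟨x, hx⟩)⟩
  · rintro ⟨x, hx, hu⟩
    exact ⟨⟨fun a b => Subtype.ext ((hu a a.2).trans (hu b b.2).symm)⟩, ⟨⟨x, hx⟩⟩⟩

lemma inc_aff (c : F) (w : Fin 3 → F) (hw : w ≠ 0) (h0 : w 0 = -c * w 1) (h1 : w 1 ≠ 0)
    (x y : F) :
    PGIncident (ptAff x y) (mk F w hw) ↔ y - c * x = -(w 2) / w 1 := by
  rw [ptAff, pginc_mk_mk, Fin.sum_univ_three]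
  simp only [Matrix.cons_val_zero, Matrix.cons_val_one, Matrix.head_cons, Matrix.cons_val_two, Matrix.tail_cons, one_mul, h0]
  rw [eq_div_iff h1]
  constructor <;> intro h <;> linear_combination h

lemma card_line (f : Polynomial F) (c : F) (w : Fin 3 → F) (hw : w ≠ 0)
    (h0 : w 0 = -c * w 1) (h1 : w 1 ≠ 0) :
    Nat.card {p : PG F // p ∈ Sf f ∧ PGIncident p (mk F w hw)} =
      Nat.card {x : F // f.eval x - c * x = -(w 2) / w 1} := by
  symm
  apply Nat.card_congr
  apply Equiv.ofBijective
    (f := fun xx : {x : F // f.eval x - c * x = -(w 2) / w 1} =>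
      (⟨ptAff xx.1 (f.eval xx.1),
        Or.inl ⟨xx.1, rfl⟩, (inc_aff c w hw h0 h1 _ _).mpr xx.2⟩ :
        {p : PG F // p ∈ Sf f ∧ PGIncident p (mk F w hw)}))
  constructor
  · rintro ⟨x, hx⟩ ⟨x', hx'⟩ h
    have := (ptAff_inj (Subtype.ext_iff.mp h)).1
    exact Subtype.ext this
  · rintro ⟨p, hp, hinc⟩
    rcases hp with ⟨x, rfl⟩ | rfl
    · exact ⟨⟨x, (inc_aff c w hw h0 h1 _ _).mp hinc⟩, rfl⟩
    · rw [pginc_mk_mk, Fin.sum_univ_three] at hinc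
      simp only [Matrix.cons_val_zero, Matrix.cons_val_one, Matrix.head_cons,
        Matrix.cons_val_two, Matrix.tail_cons, zero_mul, one_mul, add_zero, zero_add] at hinc
      exact absurd hinc h1

end Aux

/-- `⟨(1,c,0)⟩` is a nucleus of `S_f` (every line through it meets `S_f`
in exactly one point) if and only if `x ↦ f(x) − c·x` is a permutation of `F_q`. -/
theorem stmt16 (F : Type*) [Field F] [Fintype F] (f : Polynomial F) (c : F) :
    (∀ l : PG F, PGIncident (ptInf c) l →
        Nat.card {p : PG F // p ∈ Sf f ∧ PGIncident p l} = 1) ↔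
      Function.Bijective (fun x : F => f.eval x - c * x) := by
  open Projectivization in
  constructor
  · intro h
    rw [Function.bijective_iff_existsUnique]
    intro t
    have hw : (![c, -1, t] : Fin 3 → F) ≠ 0 := by
      intro hh; simpa using congrFun hh 1
    have hinc : PGIncident (ptInf c) (mk F ![c, -1, t] hw) := by
      rw [ptInf, pginc_mk_mk, Fin.sum_univ_three]
      simp
    have := h _ hinc
    rw [card_line f c _ hw (by simp) (by simp)] at this
    rw [card_subtype_one_iff] at this
    simpa using this
  · intro hbij l hl
    rw [← mk_rep l] at hl ⊢
    rw [ptInf, pginc_mk_mk, Fin.sum_univ_three] at hl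
    simp only [Matrix.cons_val_zero, Matrix.cons_val_one, Matrix.head_cons,
      Matrix.cons_val_two, Matrix.tail_cons, one_mul, zero_mul, add_zero] at hl
    by_cases h1 : l.rep 1 = 0
    · have h0 : l.rep 0 = 0 := by rw [h1, mul_zero, add_zero] at hl; exact hl
      have h2 : l.rep 2 ≠ 0 := by
        intro h2
        apply l.rep_nonzero
        funext i; fin_cases i <;> assumption
      rw [card_subtype_one_iff]
      refine ⟨Projectivization.mk F ![0, 1, 0] (by intro h; simpa using congrFun h 1),
        ⟨Or.inr rfl, ?_⟩, ?_⟩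
      · rw [pginc_mk_mk, Fin.sum_univ_three]
        simp [h1]
      · rintro p ⟨hp, hinc⟩
        rcases hp with ⟨x, rfl⟩ | rfl
        · unfold ptAff at hinc
          rw [pginc_mk_mk, Fin.sum_univ_three] at hinc
          simp only [Matrix.cons_val_zero, Matrix.cons_val_one, Matrix.head_cons,
            Matrix.cons_val_two, Matrix.tail_cons, one_mul, h0, h1, mul_zero, zero_add,
            add_zero, zero_mul] at hinc
          exact absurd hinc h2
        · rfl
    · have h0 : l.rep 0 = -c * l.rep 1 := by linear_combination hl
      rw [card_line f c _ l.rep_nonzero h0 h1, card_subtype_one_iff]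
      exact Function.bijective_iff_existsUnique _ |>.mp hbij _
end

section
/- Let q = p^s be a power of a prime p and let 0 ≤ i ≤ s−1 with h = gcd(i,s). Then the image of the map x ↦ x^{p^i + 1} on F_q* has size (q−1)/gcd(p^i+1, q−1), and gcd(p^i+1, p^s−1) = p^h+1 when l_2(i) < l_2(s), gcd(p^i+1, p^s−1) = 2 when p is odd and l_2(i) ≥ l_2(s), and gcd(p^i+1, p^s−1) = 1 when p = 2 and l_2(i) ≥ l_2(s), where l_2(n) denotes the 2-adic valuation of n (with l_2(0) = +∞). -/
open Subgroup

private lemma aux_gcd_dvd_stmt18 {i s : ℕ} (hi : i ≠ 0) (hs : s ≠ 0)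
    (hv : padicValNat 2 s ≤ padicValNat 2 i) : Nat.gcd (2 * i) s ∣ i := by
  have h2i : 2 * i ≠ 0 := by simp [hi]
  have hg0 : Nat.gcd (2 * i) s ≠ 0 := Nat.gcd_ne_zero_right hs
  rw [← Nat.factorization_le_iff_dvd hg0 hi, Nat.factorization_gcd h2i hs,
    Finsupp.le_def]
  intro q
  rw [Finsupp.inf_apply]
  by_cases hq : q = 2
  · subst hq
    refine le_trans inf_le_right ?_
    rw [Nat.factorization_def _ Nat.prime_two, Nat.factorization_def _ Nat.prime_two]
    exact hv
  · refine le_trans inf_le_left ?_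
    rw [Nat.factorization_mul two_ne_zero hi, Finsupp.add_apply,
      Nat.Prime.factorization Nat.prime_two, Finsupp.single_apply, if_neg (Ne.symm hq)]
    simp

/-- for `q = p^s`, `0 ≤ i ≤ s−1`, `h = gcd(i,s)`: the image of
`x ↦ x^{p^i+1}` on `F_q*` has size `(q−1)/gcd(p^i+1, q−1)`, and
`gcd(p^i+1, p^s−1) = p^h+1` when `l₂(i) < l₂(s)`, `= 2` when `p` is odd and
`l₂(i) ≥ l₂(s)`, and `= 1` when `p = 2` and `l₂(i) ≥ l₂(s)`, where `l₂` is the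
2-adic valuation (with `l₂(0) = +∞`). -/
theorem stmt18 (p s : ℕ) (hp : p.Prime) (F : Type*) [Field F] [Fintype F]
    (hF : Fintype.card F = p ^ s) (i h : ℕ) (hi : i < s) (hh : h = Nat.gcd i s) :
    Nat.card (Set.range fun x : Fˣ => x ^ (p ^ i + 1))
      = (p ^ s - 1) / Nat.gcd (p ^ i + 1) (p ^ s - 1) ∧
    ((i ≠ 0 ∧ padicValNat 2 i < padicValNat 2 s) →
      Nat.gcd (p ^ i + 1) (p ^ s - 1) = p ^ h + 1) ∧
    ((Odd p ∧ (i = 0 ∨ padicValNat 2 s ≤ padicValNat 2 i)) →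
      Nat.gcd (p ^ i + 1) (p ^ s - 1) = 2) ∧
    ((p = 2 ∧ (i = 0 ∨ padicValNat 2 s ≤ padicValNat 2 i)) →
      Nat.gcd (p ^ i + 1) (p ^ s - 1) = 1) := by
  have hp2 : 2 ≤ p := hp.two_le
  have hs0 : s ≠ 0 := by omega
  have hps1 : 1 ≤ p ^ s := Nat.one_le_pow _ _ hp.pos
  constructor
  · -- cardinality of the image of the power map
    haveI := Classical.decEq F
    obtain ⟨g, hg⟩ := IsCyclic.exists_generator (α := Fˣ)
    have hcard : Nat.card Fˣ = p ^ s - 1 := by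
      rw [Nat.card_eq_fintype_card, Fintype.card_units, hF]
    have hrange : (Set.range fun x : Fˣ => x ^ (p ^ i + 1))
        = ↑(zpowers (g ^ (p ^ i + 1))) := by
      ext y
      simp only [Set.mem_range, SetLike.mem_coe]
      constructor
      · rintro ⟨x, rfl⟩
        obtain ⟨k, rfl⟩ := mem_powers_iff_mem_zpowers.mpr (hg x)
        rw [← pow_mul, mul_comm, pow_mul]
        exact pow_mem (mem_zpowers _) k
      · intro hy
        obtain ⟨k, rfl⟩ := mem_powers_iff_mem_zpowers.mpr hy
        exact ⟨g ^ k, by rw [← pow_mul, mul_comm, pow_mul]⟩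
    rw [hrange]
    have hz : Nat.card ↥(zpowers (g ^ (p ^ i + 1))) = orderOf (g ^ (p ^ i + 1)) :=
      Nat.card_zpowers _
    simp only [SetLike.coe_sort_coe]
    rw [hz, orderOf_pow, orderOf_eq_card_of_forall_mem_zpowers hg, hcard, Nat.gcd_comm]
  -- gcd computations
  set d := Nat.gcd (p ^ i + 1) (p ^ s - 1) with hd
  have hdl : d ∣ p ^ i + 1 := Nat.gcd_dvd_left _ _
  have hdr : d ∣ p ^ s - 1 := Nat.gcd_dvd_right _ _
  have hus : (p : ZMod d) ^ s = 1 := by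
    have h0 := (ZMod.natCast_eq_zero_iff _ d).mpr hdr
    rwa [Nat.cast_sub hps1, Nat.cast_pow, Nat.cast_one, sub_eq_zero] at h0
  have hui : (p : ZMod d) ^ i = -1 := by
    have h0 := (ZMod.natCast_eq_zero_iff _ d).mpr hdl
    rw [Nat.cast_add, Nat.cast_pow, Nat.cast_one] at h0
    exact eq_neg_of_add_eq_zero_left h0
  have hods : orderOf (p : ZMod d) ∣ s := orderOf_dvd_of_pow_eq_one hus
  have hod2i : orderOf (p : ZMod d) ∣ 2 * i :=
    orderOf_dvd_of_pow_eq_one (by rw [mul_comm, pow_mul, hui, neg_one_sq])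
  -- shared: `d ∣ 2` in the "≥" case
  have hd2 : (i = 0 ∨ padicValNat 2 s ≤ padicValNat 2 i) → d ∣ 2 := by
    rintro (rfl | hv)
    · simpa using hdl
    · by_cases hi0 : i = 0
      · subst hi0; simpa using hdl
      · have hgi : Nat.gcd (2 * i) s ∣ i := aux_gcd_dvd_stmt18 hi0 hs0 hv
        have hoi : orderOf (p : ZMod d) ∣ i :=
          (Nat.dvd_gcd hod2i hods).trans hgi
        have h1 : (p : ZMod d) ^ i = 1 := orderOf_dvd_iff_pow_eq_one.mp hoi
        have h2 : ((2 : ℕ) : ZMod d) = 0 := by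
          have h12 : (1 : ZMod d) = -1 := h1.symm.trans hui
          push_cast
          linear_combination h12
        exact (ZMod.natCast_eq_zero_iff 2 d).mp h2
  refine ⟨?_, ?_, ?_⟩
  · rintro ⟨hi0, hvlt⟩
    have hhi : h ∣ i := hh ▸ Nat.gcd_dvd_left i s
    have hhs : h ∣ s := hh ▸ Nat.gcd_dvd_right i s
    have hh0 : h ≠ 0 := by
      rw [hh]; exact Nat.gcd_ne_zero_left hi0
    have hvh : padicValNat 2 h = padicValNat 2 i := by
      have hfact := DFunLike.congr_fun (Nat.factorization_gcd hi0 hs0) 2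
      rw [Finsupp.inf_apply, Nat.factorization_def _ Nat.prime_two,
        Nat.factorization_def _ Nat.prime_two,
        Nat.factorization_def _ Nat.prime_two] at hfact
      rw [hh, hfact]
      exact inf_eq_left.mpr (le_of_lt hvlt)
    obtain ⟨a, ha⟩ := hhi
    obtain ⟨b, hb⟩ := hhs
    have ha0 : a ≠ 0 := by rintro rfl; simp at ha; omega
    have hb0 : b ≠ 0 := by rintro rfl; simp at hb; omega
    have hva : padicValNat 2 a = 0 := by
      have := padicValNat.mul (p := 2) hh0 ha0
      rw [← ha] at this; omega
    have haodd : Odd a := by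
      rcases Nat.even_or_odd a with he | ho
      · exfalso
        rcases padicValNat.eq_zero_iff.mp hva with h' | h' | h'
        · omega
        · exact ha0 h'
        · exact h' he.two_dvd
      · exact ho
    have hbeven : 2 ∣ b := by
      by_contra hnb
      have : padicValNat 2 b = 0 := padicValNat.eq_zero_of_not_dvd hnb
      have := padicValNat.mul (p := 2) hh0 hb0
      rw [← hb] at this; omega
    obtain ⟨c, hc⟩ := hbeven
    have hfwd : p ^ h + 1 ∣ d := by
      refine Nat.dvd_gcd ?_ ?_
      · have := Odd.nat_add_dvd_pow_add_pow (p ^ h) 1 haodd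
        rwa [← pow_mul, one_pow, ← ha] at this
      · have h1 : p ^ h + 1 ∣ p ^ (2 * h) - 1 := by
          have : p ^ (2 * h) - 1 = (p ^ h + 1) * (p ^ h - 1) := by
            rw [mul_comm 2 h, pow_mul, ← Nat.sq_sub_sq]
          exact this ▸ dvd_mul_right _ _
        have h2 : p ^ (2 * h) - 1 ∣ p ^ s - 1 := by
          have := Nat.sub_dvd_pow_sub_pow (p ^ (2 * h)) 1 c
          rwa [← pow_mul, one_pow, show 2 * h * c = h * b by rw [hc]; ring, ← hb] at this
        exact h1.trans h2
    have hbwd : d ∣ p ^ h + 1 := by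
      have hg2h : Nat.gcd (2 * i) s ∣ 2 * h := by
        rw [hh, ← Nat.gcd_mul_left 2 i s]
        exact Nat.dvd_gcd (Nat.gcd_dvd_left _ _)
          ((Nat.gcd_dvd_right _ _).trans (dvd_mul_left s 2))
      have ho2h : orderOf (p : ZMod d) ∣ 2 * h := (Nat.dvd_gcd hod2i hods).trans hg2h
      have hu2h : (p : ZMod d) ^ (2 * h) = 1 := orderOf_dvd_iff_pow_eq_one.mp ho2h
      obtain ⟨t, ht⟩ := haodd
      have huh : (p : ZMod d) ^ h = -1 := by
        have heq : (p : ZMod d) ^ i = (p : ZMod d) ^ h := by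
          rw [ha, ht, show h * (2 * t + 1) = 2 * h * t + h by ring, pow_add, pow_mul,
            hu2h, one_pow, one_mul]
        rw [← heq, hui]
      have h0 : ((p ^ h + 1 : ℕ) : ZMod d) = 0 := by
        push_cast
        rw [huh]; ring
      exact (ZMod.natCast_eq_zero_iff _ d).mp h0
    exact Nat.dvd_antisymm hbwd hfwd
  · rintro ⟨hpodd, hcase⟩
    have h2l : 2 ∣ p ^ i + 1 := (Odd.add_one (hpodd.pow)).two_dvd
    have h2r : 2 ∣ p ^ s - 1 := (Nat.Odd.sub_odd (hpodd.pow) odd_one).two_dvd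
    exact Nat.dvd_antisymm (hd2 hcase) (Nat.dvd_gcd h2l h2r)
  · rintro ⟨rfl, hcase⟩
    have hodd : ¬ 2 ∣ 2 ^ s - 1 := by
      have : 2 ∣ 2 ^ s := dvd_pow_self 2 hs0
      omega
    rcases (Nat.prime_two.eq_one_or_self_of_dvd d (hd2 hcase)) with h1 | h2
    · exact h1
    · exact absurd (h2 ▸ hdr) hodd
end
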